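/- Let a, b, c, n be integers with a ≠ 0 and n ≥ 2, and let d = b² − 4·a·c. If d is not a quadratic residue of n, then IQF is valid for q(x) ≡ 0 (mod n). -/

import Mathlib

/-- An integer `u` is a quadratic residue of the nonzero integer `v`. -/
def IsQR (v u : ℤ) : Prop := ∃ x : ℤ, v ∣ x ^ 2 - u

/-- The intermediate form of the quadratic formula (IQF) is valid for
`a·x² + b·x + c ≡ 0 (mod n)`. -/
def IQF (a b c n : ℤ) : Prop :=
  ∀ x : ℤ, n ∣ a * x ^ 2 + b * x + c ↔
    ∃ s : ℤ, n ∣ s ^ 2 - (b ^ 2 - 4 * a * c) ∧ n ∣ 2 * a * x - (-b + s)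

theorem sq_two_mul_add_sub_discrim (a b c x : ℤ) :
    (2 * a * x + b) ^ 2 - (b ^ 2 - 4 * a * c) = 4 * a * (a * x ^ 2 + b * x + c) := by
  ring

theorem isQR_discrim_of_dvd {a b c n x : ℤ} (hx : n ∣ a * x ^ 2 + b * x + c) :
    IsQR n (b ^ 2 - 4 * a * c) :=
  ⟨2 * a * x + b, sq_two_mul_add_sub_discrim a b c x ▸ hx.mul_left (4 * a)⟩

theorem iqf_of_nonresidue_general (a b c n : ℤ)
    (h : ¬ IsQR n (b ^ 2 - 4 * a * c)) : IQF a b c n := fun _ =>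
  iff_of_false (fun hx => h (isQR_discrim_of_dvd hx)) fun ⟨s, hs, _⟩ => h ⟨s, hs⟩

/-- Paper's Lemma 3.6. -/
theorem iqf_of_nonresidue (a b c n : ℤ) (ha : a ≠ 0) (hn : 2 ≤ n)
    (h : ¬ IsQR n (b ^ 2 - 4 * a * c)) : IQF a b c n :=
  iqf_of_nonresidue_general a b c n h
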